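/- Given a sequence s = c₁, …, c_n of crossing sections where c_i is an a_i-crossing section, c₁ is initial, c_n is accepting, and each consecutive pair (c_i, c_{i+1}) is in the matching relation M, there exists an accepting two-way run ρ over the word a₁…a_n whose crossing section sequence is exactly s; moreover V(ρ) = Σᵢ V(c_i). -/

import Mathlib

/-- Two-way finite automaton; `Sum.inr false` is the left delimiter ⊢,
`Sum.inr true` is the right delimiter ⊣. -/
structure TwoWayFA (σ : Type) (Q : Type) where
  /-- reading direction of each state: `true` = right-reading -/
  isRight : Q → Bool
  init : Set Q
  acc : Set Q
  trans : Q → (σ ⊕ Bool) → Q → Prop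

namespace TwoWayFA

variable {σ Q : Type}

/-- The letter of ⊢w⊣ at index `i` (0-based). -/
def readAt (w : List σ) (i : ℕ) : Option (σ ⊕ Bool) :=
  if i = 0 then some (Sum.inr false)
  else if i = w.length + 1 then some (Sum.inr true)
  else (w[i - 1]?).map Sum.inl

/-- Index of the letter read from configuration `c = (state, head position)`,
where the head position counts the letters of ⊢w⊣ to the left of the head. -/
def readIdx (A : TwoWayFA σ Q) (c : Q × ℕ) : ℕ :=
  if A.isRight c.1 then c.2 else c.2 - 1

def step (A : TwoWayFA σ Q) (w : List σ) (c c' : Q × ℕ) : Prop :=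
  ∃ a, readAt w (A.readIdx c) = some a ∧ A.trans c.1 a c'.1 ∧
    (if A.isRight c.1 then c'.2 = c.2 + 1 else c.2 ≠ 0 ∧ c'.2 = c.2 - 1)

def IsRun (A : TwoWayFA σ Q) (w : List σ) (ρ : List (Q × ℕ)) : Prop :=
  ρ ≠ [] ∧ ρ.Chain' (A.step w)

/-- An accepting run starts at the left end of ⊢w⊣ in an initial state and
halts past the right delimiter in an accepting state. -/
def IsAccRun (A : TwoWayFA σ Q) (w : List σ) (ρ : List (Q × ℕ)) : Prop :=
  A.IsRun w ρ ∧ (∃ q ∈ A.init, ρ.head? = some (q, 0)) ∧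
    (∃ q ∈ A.acc, ρ.getLast? = some (q, w.length + 2))

def lang (A : TwoWayFA σ Q) : Set (List σ) := {w | ∃ ρ, A.IsAccRun w ρ}

def Deterministic (A : TwoWayFA σ Q) : Prop :=
  A.init.Subsingleton ∧ ∀ q a q₁ q₂, A.trans q a q₁ → A.trans q a q₂ → q₁ = q₂

def OneWay (A : TwoWayFA σ Q) : Prop := ∀ q, A.isRight q = true

def Unambiguous (A : TwoWayFA σ Q) : Prop :=
  ∀ w ρ₁ ρ₂, A.IsAccRun w ρ₁ → A.IsAccRun w ρ₂ → ρ₁ = ρ₂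

end TwoWayFA

/-- Number of visits of run `ρ` to input position `p`. -/
def visits {Q : Type} (ρ : List (Q × ℕ)) (p : ℕ) : ℕ :=
  (ρ.filter fun c => c.2 == p).length

/-- A run is `k`-visit if it visits every input position at most `k` times. -/
def KVisit {Q : Type} (k : ℕ) (ρ : List (Q × ℕ)) : Prop := ∀ p, visits ρ p ≤ k

/-- `A` is `k`-visit: every accepting run visits each position at most `k` times. -/
def TwoWayFA.IsKVisit {σ Q : Type} (A : TwoWayFA σ Q) (k : ℕ) : Prop :=
  ∀ w ρ, A.IsAccRun w ρ → KVisit k ρ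

/-- Weight of a step (a pair of consecutive configurations) of a Parikh automaton. -/
def stepWeight {σ Q : Type} (A : TwoWayFA σ Q) {d : ℕ}
    (lam : Q → (σ ⊕ Bool) → Q → (Fin d → ℤ)) (w : List σ)
    (cc : (Q × ℕ) × (Q × ℕ)) : Fin d → ℤ :=
  match TwoWayFA.readAt w (A.readIdx cc.1) with
  | some a => lam cc.1.1 a cc.2.1
  | none => 0

/-- Value of a run of a Parikh automaton: the sum of the weight vectors of its steps. -/
def runVal {σ Q : Type} (A : TwoWayFA σ Q) {d : ℕ}
    (lam : Q → (σ ⊕ Bool) → Q → (Fin d → ℤ)) (w : List σ) (ρ : List (Q × ℕ)) :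
    Fin d → ℤ :=
  ((ρ.zip ρ.tail).map (stepWeight A lam w)).sum

/-- Language of a two-way Parikh automaton `(A, lam, S)` with semi-linear constraint `S`. -/
def paLang {σ Q : Type} (A : TwoWayFA σ Q) {d : ℕ}
    (lam : Q → (σ ⊕ Bool) → Q → (Fin d → ℤ)) (S : Set (Fin d → ℤ)) : Set (List σ) :=
  {w | ∃ ρ, A.IsAccRun w ρ ∧ runVal A lam w ρ ∈ S}

/-- The word ⊢w⊣ over the extended alphabet. -/
def extWord {σ : Type} (w : List σ) : List (σ ⊕ Bool) :=
  Sum.inr false :: (w.map Sum.inl ++ [Sum.inr true])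

/-- An `a`-crossing section: a nonempty sequence of at most `k` transitions on the
letter `a`, whose first source and last target are right-reading and whose consecutive
sources alternate reading directions. -/
def IsCrossSection {σ Q : Type} (A : TwoWayFA σ Q) (k : ℕ) (a : σ ⊕ Bool)
    (c : List (Q × Q)) : Prop :=
  c ≠ [] ∧ c.length ≤ k ∧ (∀ t ∈ c, A.trans t.1 a t.2) ∧
    (∃ t, c.head? = some t ∧ A.isRight t.1 = true) ∧
    (∃ t, c.getLast? = some t ∧ A.isRight t.2 = true) ∧
    c.Chain' (fun t t' => A.isRight t.1 ≠ A.isRight t'.1)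

/-- The interleaved state sequence p₁ q₂ p₃ q₄ … (sources at even 0-based indices,
targets at odd indices). -/
def sSeqL {Q : Type} (c : List (Q × Q)) : List Q :=
  List.ofFn fun i : Fin c.length => if i.1 % 2 = 0 then (c.get i).1 else (c.get i).2

/-- The interleaved state sequence q₁ p₂ q₃ p₄ … (targets at even 0-based indices,
sources at odd indices). -/
def sSeqR {Q : Type} (c : List (Q × Q)) : List Q :=
  List.ofFn fun i : Fin c.length => if i.1 % 2 = 0 then (c.get i).2 else (c.get i).1

/-- Group a list into consecutive pairs (from the front) and delete every pair
satisfying `good`; a trailing unmatched element is kept. -/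
def chunkReduce {Q : Type} (good : Q → Q → Bool) : List Q → List Q
  | x :: y :: rest => (if good x y then [] else [x, y]) ++ chunkReduce good rest
  | l => l

/-- The L-anchorage of a crossing section. -/
def LAnch {σ Q : Type} [DecidableEq Q] (A : TwoWayFA σ Q) (c : List (Q × Q)) : List Q :=
  match sSeqL c with
  | [] => []
  | x :: rest => x :: chunkReduce (fun u v => decide (u = v) && A.isRight u) rest

/-- The R-anchorage of a crossing section. -/
def RAnch {σ Q : Type} [DecidableEq Q] (A : TwoWayFA σ Q) (c : List (Q × Q)) : List Q :=
  chunkReduce (fun u v => decide (u = v) && !A.isRight u) (sSeqR c)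

/-- A crossing section is initial if its L-anchorage is a single initial state. -/
def InitialCS {σ Q : Type} [DecidableEq Q] (A : TwoWayFA σ Q) (c : List (Q × Q)) : Prop :=
  ∃ q ∈ A.init, LAnch A c = [q]

/-- A crossing section is accepting if its R-anchorage is a single accepting state. -/
def AcceptingCS {σ Q : Type} [DecidableEq Q] (A : TwoWayFA σ Q) (c : List (Q × Q)) : Prop :=
  ∃ q ∈ A.acc, RAnch A c = [q]

/-- The matching relation: the R-anchorage of `c₁` equals the L-anchorage of `c₂`. -/
def MatchCS {σ Q : Type} [DecidableEq Q] (A : TwoWayFA σ Q)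
    (c₁ c₂ : List (Q × Q)) : Prop :=
  RAnch A c₁ = LAnch A c₂

/-- The crossing section of a run at letter index `i`: the transitions of the run
reading the `i`-th letter of ⊢w⊣, in order of appearance. -/
def sectionAt {σ Q : Type} (A : TwoWayFA σ Q) (w : List σ) (ρ : List (Q × ℕ)) (i : ℕ) :
    List (Q × Q) :=
  (ρ.zip ρ.tail).filterMap fun cc =>
    if A.readIdx cc.1 = i then some (cc.1.1, cc.2.1) else none

/-- The crossing section sequence of a run, over all letters of ⊢w⊣. -/
def crossSeq {σ Q : Type} (A : TwoWayFA σ Q) (w : List σ) (ρ : List (Q × ℕ)) :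
    List (List (Q × Q)) :=
  (List.range (w.length + 2)).map (sectionAt A w ρ)

/-- The value of an `a`-crossing section: the sum of the weights of its transitions. -/
def secVal {σ Q : Type} {d : ℕ} (lam : Q → (σ ⊕ Bool) → Q → (Fin d → ℤ)) (a : σ ⊕ Bool)
    (c : List (Q × Q)) : Fin d → ℤ :=
  (c.map fun t => lam t.1 a t.2).sum

/-!
The run is woven from the sections one transition at a time. A not yet consumed suffix of a
section determines the states it still has to exchange across its left and its right boundary
(for a whole section: its L- and R-anchorage). The invariant is that at every boundary the two
adjacent sections agree on these states, except at the head, where the current state is owed by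
the section about to read it; firing the first pending transition of that section moves the
head and restores the invariant. This works because matching anchorages force every turn of the
head inside a section to be a bounce: otherwise an unmatched pair would survive in an anchorage
at a position where its neighbour only holds states of the other direction. When the head
leaves ⊣, all sections have been consumed, so the crossing sections of the run are exactly the
given ones, and its value is the sum of their values.
-/

section ChunkReduce

variable {α : Type} (g : α → α → Bool)

theorem chunkReduce_cons_cons (x y : α) (l : List α) :
    chunkReduce g (x :: y :: l) = (if g x y then [] else [x, y]) ++ chunkReduce g l := rfl

theorem chunkReduce_cons_cons_of_good {x y : α} (h : g x y = true) (l : List α) :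
    chunkReduce g (x :: y :: l) = chunkReduce g l := by
  simp [chunkReduce_cons_cons, h]

theorem chunkReduce_cons_cons_of_not_good {x y : α} (h : g x y = false) (l : List α) :
    chunkReduce g (x :: y :: l) = x :: y :: chunkReduce g l := by
  simp [chunkReduce_cons_cons, h]

theorem length_chunkReduce_mod_two : ∀ l : List α, (chunkReduce g l).length % 2 = l.length % 2
  | [] | [_] => rfl
  | x :: y :: l => by
    have := length_chunkReduce_mod_two l
    by_cases h : g x y <;> simp [chunkReduce_cons_cons, h] <;> omega

theorem exists_getElem?_of_getElem?_chunkReduce :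
    ∀ (l : List α) {k : ℕ} {x : α}, (chunkReduce g l)[k]? = some x →
      ∃ j, j % 2 = k % 2 ∧ l[j]? = some x
  | [], k, _, h | [_], k, _, h => ⟨k, rfl, h⟩
  | x :: y :: l, k, z, h => by
    by_cases hg : g x y
    · rw [chunkReduce_cons_cons_of_good g hg] at h
      obtain ⟨j, hj, hl⟩ := exists_getElem?_of_getElem?_chunkReduce l h
      exact ⟨j + 2, by omega, hl⟩
    · rw [chunkReduce_cons_cons_of_not_good g (by simpa using hg)] at h
      match k, h with
      | 0, h => exact ⟨0, rfl, h⟩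
      | 1, h => exact ⟨1, rfl, h⟩
      | k + 2, h =>
        obtain ⟨j, hj, hl⟩ := exists_getElem?_of_getElem?_chunkReduce l (k := k) h
        exact ⟨j + 2, by omega, hl⟩

theorem exists_getElem?_chunkReduce_of_not_good :
    ∀ (l : List α) (m : ℕ) {x y : α}, l[2 * m]? = some x → l[2 * m + 1]? = some y →
      g x y = false → ∃ k, k % 2 = 0 ∧ (chunkReduce g l)[k]? = some x ∧
        (chunkReduce g l)[k + 1]? = some y
  | [], _, _, _, hx, _, _ => by simp at hx
  | [_], m, _, _, _, hy, _ => by simp at hy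
  | x' :: y' :: l, 0, x, y, hx, hy, hg => by
    simp only [Nat.mul_zero, List.getElem?_cons_zero, List.getElem?_cons_succ,
      Option.some.injEq] at hx hy
    subst hx hy
    exact ⟨0, rfl, by simp [chunkReduce_cons_cons_of_not_good g hg]⟩
  | x' :: y' :: l, m + 1, x, y, hx, hy, hg => by
    obtain ⟨k, hk, hkx, hky⟩ := exists_getElem?_chunkReduce_of_not_good l m
      (by simpa [Nat.mul_succ] using hx) (by simpa [Nat.mul_succ] using hy) hg
    by_cases hg' : g x' y'
    · exact ⟨k, hk, by rwa [chunkReduce_cons_cons_of_good g hg'],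
        by rwa [chunkReduce_cons_cons_of_good g hg']⟩
    · rw [chunkReduce_cons_cons_of_not_good g (by simpa using hg')]
      exact ⟨k + 2, by omega, hkx, hky⟩

end ChunkReduce

section StateSequences

variable {Q : Type}

@[simp] theorem sSeqL_nil : sSeqL ([] : List (Q × Q)) = [] := rfl

@[simp] theorem length_sSeqR (ts : List (Q × Q)) : (sSeqR ts).length = ts.length := by
  simp [sSeqR]

theorem sSeqL_cons (t : Q × Q) (ts : List (Q × Q)) : sSeqL (t :: ts) = t.1 :: sSeqR ts := by
  simp only [sSeqL, sSeqR, List.ofFn_succ]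
  congr 1
  simp only [List.length_cons, List.get_eq_getElem, Fin.val_succ,
    List.getElem_cons_succ]
  congr 1
  funext i
  split_ifs <;> first | rfl | omega

theorem sSeqR_cons (t : Q × Q) (ts : List (Q × Q)) : sSeqR (t :: ts) = t.2 :: sSeqL ts := by
  simp only [sSeqL, sSeqR, List.ofFn_succ]
  congr 1
  simp only [List.length_cons, List.get_eq_getElem, Fin.val_succ,
    List.getElem_cons_succ]
  congr 1
  funext i
  split_ifs <;> first | rfl | omega

theorem getElem?_sSeqR (ts : List (Q × Q)) (k : ℕ) :
    (sSeqR ts)[k]? = Option.map (fun t => if k % 2 = 0 then t.2 else t.1) (ts[k]?) := by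
  simp only [sSeqR, List.getElem?_ofFn, List.get_eq_getElem]
  split_ifs with h <;> simp [h]

theorem getElem?_sSeqR_of_lt {ts : List (Q × Q)} {k : ℕ} (hk : k < ts.length) :
    (sSeqR ts)[k]? = some (if k % 2 = 0 then ts[k].2 else ts[k].1) := by
  simp [getElem?_sSeqR, List.getElem?_eq_getElem hk]

end StateSequences

section Anchorages

variable {σ Q : Type} [DecidableEq Q] (A : TwoWayFA σ Q)

/-- The states that a not yet consumed suffix `ts` of a crossing section exchanges across its
left boundary, when its first source has reading direction `β`; for `β = true` this is the
L-anchorage. -/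
def LAnchSuffix : Bool → List (Q × Q) → List Q
  | true, ts => LAnch A ts
  | false, ts => chunkReduce (fun u v => decide (u = v) && A.isRight u) (sSeqR ts)

/-- The right-boundary counterpart of `LAnchSuffix`; for `β = true` this is the R-anchorage. -/
def RAnchSuffix : Bool → List (Q × Q) → List Q
  | true, ts => RAnch A ts
  | false, [] => []
  | false, t :: ts => t.1 :: RAnch A ts

variable {A}

@[simp] theorem LAnchSuffix_nil (β : Bool) : LAnchSuffix A β [] = [] := by
  cases β <;> rfl

@[simp] theorem RAnchSuffix_nil (β : Bool) : RAnchSuffix A β [] = [] := by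
  cases β <;> rfl

theorem LAnchSuffix_true_cons (t : Q × Q) (ts : List (Q × Q)) :
    LAnchSuffix A true (t :: ts) = t.1 :: LAnchSuffix A false ts := by
  simp only [LAnchSuffix, LAnch, sSeqL_cons]

theorem RAnchSuffix_false_cons (t : Q × Q) (ts : List (Q × Q)) :
    RAnchSuffix A false (t :: ts) = t.1 :: RAnchSuffix A true ts := rfl

theorem RAnchSuffix_true_cons_of_isRight {t : Q × Q} (h : A.isRight t.2 = true)
    (ts : List (Q × Q)) : RAnchSuffix A true (t :: ts) = t.2 :: RAnchSuffix A false ts := by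
  cases ts with
  | nil => rfl
  | cons t' ts =>
    simp only [RAnchSuffix, RAnch, sSeqR_cons, sSeqL_cons]
    rw [chunkReduce_cons_cons_of_not_good _ (by simp [h])]

theorem LAnchSuffix_false_cons_of_not_isRight {t : Q × Q} (h : A.isRight t.2 = false)
    (ts : List (Q × Q)) : LAnchSuffix A false (t :: ts) = t.2 :: LAnchSuffix A true ts := by
  cases ts with
  | nil => rfl
  | cons t' ts =>
    simp only [LAnchSuffix, LAnch, sSeqR_cons, sSeqL_cons]
    rw [chunkReduce_cons_cons_of_not_good _ (by simp [h])]

theorem RAnchSuffix_true_cons_cons_of_bounce {t t' : Q × Q} (h : A.isRight t.2 = false)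
    (he : t'.1 = t.2) (ts : List (Q × Q)) :
    RAnchSuffix A true (t :: t' :: ts) = RAnchSuffix A true ts := by
  simp only [RAnchSuffix, RAnch, sSeqR_cons, sSeqL_cons]
  rw [chunkReduce_cons_cons_of_good _ (by simp [h, he])]

theorem LAnchSuffix_false_cons_cons_of_bounce {t t' : Q × Q} (h : A.isRight t.2 = true)
    (he : t'.1 = t.2) (ts : List (Q × Q)) :
    LAnchSuffix A false (t :: t' :: ts) = LAnchSuffix A false ts := by
  simp only [LAnchSuffix, sSeqR_cons, sSeqL_cons]
  rw [chunkReduce_cons_cons_of_good _ (by simp [h, he])]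

theorem RAnchSuffix_false_cons_of_bounce {t t' : Q × Q} (h : A.isRight t.2 = false)
    (he : t'.1 = t.2) (ts : List (Q × Q)) :
    RAnchSuffix A false (t' :: ts) = t.2 :: RAnchSuffix A true (t :: t' :: ts) := by
  rw [RAnchSuffix_true_cons_cons_of_bounce h he, RAnchSuffix_false_cons, he]

theorem LAnchSuffix_true_cons_of_bounce {t t' : Q × Q} (h : A.isRight t.2 = true)
    (he : t'.1 = t.2) (ts : List (Q × Q)) :
    LAnchSuffix A true (t' :: ts) = t.2 :: LAnchSuffix A false (t :: t' :: ts) := by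
  rw [LAnchSuffix_false_cons_cons_of_bounce h he, LAnchSuffix_true_cons, he]

theorem length_LAnch_mod_two (ts : List (Q × Q)) : (LAnch A ts).length % 2 = ts.length % 2 := by
  cases ts with
  | nil => rfl
  | cons t ts =>
    have := length_chunkReduce_mod_two (fun u v => decide (u = v) && A.isRight u) (sSeqR ts)
    rw [← LAnchSuffix, LAnchSuffix_true_cons]
    simp only [LAnchSuffix, List.length_cons, length_sSeqR] at this ⊢
    omega

theorem length_RAnch_mod_two (ts : List (Q × Q)) : (RAnch A ts).length % 2 = ts.length % 2 := by
  simpa [RAnch] using length_chunkReduce_mod_two (fun u v => decide (u = v) && !A.isRight u) (sSeqR ts)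

end Anchorages

theorem apply_getElem_eq_of_isChain_ne {α : Type} {f : α → Bool} {l : List α}
    (hl : l.IsChain fun a b => f a ≠ f b) (h0 : ∀ x ∈ l.head?, f x = true) :
    ∀ j (hj : j < l.length), f l[j] = decide (j % 2 = 0) := by
  intro j
  induction j with
  | zero => intro hj; simpa using h0 l[0] (by simp [List.head?_eq_getElem?])
  | succ j ih =>
    intro hj
    have hstep := List.isChain_iff_getElem.mp hl j hj
    rw [ih (by omega)] at hstep
    cases hfj : f l[j + 1] <;> simp_all <;> omega

section SectionSuffix

variable {σ Q : Type} {A : TwoWayFA σ Q}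

theorem IsCrossSection.isRight_getElem_fst {k : ℕ} {a : σ ⊕ Bool} {ts : List (Q × Q)}
    (h : IsCrossSection A k a ts) (j : ℕ) (hj : j < ts.length) :
    A.isRight ts[j].1 = decide (j % 2 = 0) := by
  obtain ⟨-, -, -, ⟨t, ht, htR⟩, -, halt⟩ := h
  exact apply_getElem_eq_of_isChain_ne (f := fun t : Q × Q => A.isRight t.1) (l := ts) halt
    (by simpa [ht] using htR) j hj

/-- A not yet consumed suffix `ts` of a crossing section on the letter `a`, whose first source
has reading direction `β`. The field `bounce` says that a transition turning the head around is
followed, within the section, by a transition from its target. -/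
structure IsSectionSuffix (A : TwoWayFA σ Q) (a : σ ⊕ Bool) (β : Bool) (ts : List (Q × Q)) :
    Prop where
  mem_trans : ∀ t ∈ ts, A.trans t.1 a t.2
  head_isRight : ∀ t ∈ ts.head?, A.isRight t.1 = β
  alternating : ts.IsChain fun t t' => A.isRight t.1 ≠ A.isRight t'.1
  last_isRight : ∀ t ∈ ts.getLast?, A.isRight t.1 = true ∧ A.isRight t.2 = true
  bounce : ts.IsChain fun t t' => A.isRight t.2 ≠ A.isRight t.1 → t'.1 = t.2

namespace IsSectionSuffix

variable {a : σ ⊕ Bool} {β : Bool} {t t' : Q × Q} {ts : List (Q × Q)}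

theorem nil : IsSectionSuffix A a β [] :=
  ⟨by simp, by simp, .nil, by simp, .nil⟩

theorem tail (h : IsSectionSuffix A a β (t :: ts)) : IsSectionSuffix A a (!β) ts where
  mem_trans u hu := h.mem_trans u (List.mem_cons_of_mem _ hu)
  head_isRight u hu := by
    cases ts with
    | nil => simp at hu
    | cons t' ts =>
      obtain rfl : t' = u := by simpa using hu
      have := (List.isChain_cons_cons.mp h.alternating).1
      rw [h.head_isRight t rfl] at this
      cases β <;> simpa using this.symm
  alternating := h.alternating.tail
  last_isRight u hu := by
    cases ts with
    | nil => simp at hu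
    | cons t' ts => exact h.last_isRight u (by rwa [List.getLast?_cons_cons])
  bounce := h.bounce.tail

theorem ne_nil_of_not_last (h : IsSectionSuffix A a β (t :: ts))
    (ht : ¬(A.isRight t.1 = true ∧ A.isRight t.2 = true)) : ts ≠ [] := by
  rintro rfl
  exact ht (h.last_isRight t rfl)

theorem bounce_head (h : IsSectionSuffix A a β (t :: t' :: ts)) (ht : A.isRight t.2 ≠ β) :
    t'.1 = t.2 :=
  (List.isChain_cons_cons.mp h.bounce).1 (by rwa [h.head_isRight t rfl])

variable [DecidableEq Q]

theorem exists_RAnchSuffix_true_eq_cons :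
    ∀ {ts : List (Q × Q)}, IsSectionSuffix A a true ts → ts ≠ [] →
      ∃ x l, RAnchSuffix A true ts = x :: l ∧ A.isRight x = true
  | [t], h, _ => ⟨t.2, [], rfl, (h.last_isRight t rfl).2⟩
  | t :: t' :: ts, h, _ => by
    by_cases h₂ : A.isRight t.2
    · exact ⟨t.2, _, RAnchSuffix_true_cons_of_isRight h₂ _, h₂⟩
    · have ht' : A.isRight t'.1 = false := by simpa using h.tail.head_isRight t' rfl
      rw [RAnchSuffix_true_cons_cons_of_bounce (by simpa using h₂)
        (h.bounce_head (by simp [h₂]))]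
      exact exists_RAnchSuffix_true_eq_cons (by simpa using h.tail.tail)
        (h.tail.ne_nil_of_not_last (by simp [ht']))

theorem RAnchSuffix_ne_nil (h : IsSectionSuffix A a β ts) (hne : ts ≠ []) :
    RAnchSuffix A β ts ≠ [] := by
  cases β with
  | true =>
    obtain ⟨x, l, hxl, -⟩ := h.exists_RAnchSuffix_true_eq_cons hne
    simp [hxl]
  | false =>
    obtain ⟨t, ts, rfl⟩ := List.exists_cons_of_ne_nil hne
    simp [RAnchSuffix_false_cons]

theorem isRight_of_mem_head?_LAnchSuffix_false :
    ∀ {ts : List (Q × Q)}, IsSectionSuffix A a false ts →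
      ∀ x ∈ (LAnchSuffix A false ts).head?, A.isRight x = false
  | [], _, x, hx => by simp at hx
  | [t], h, _, _ => by
    have := h.head_isRight t rfl
    simp [(h.last_isRight t rfl).1] at this
  | t :: t' :: ts, h, x, hx => by
    by_cases h₂ : A.isRight t.2
    · rw [LAnchSuffix_false_cons_cons_of_bounce h₂ (h.bounce_head (by simp [h₂]))] at hx
      exact isRight_of_mem_head?_LAnchSuffix_false (by simpa using h.tail.tail) x hx
    · rw [LAnchSuffix_false_cons_of_not_isRight (by simpa using h₂)] at hx
      obtain rfl : t.2 = x := by simpa using hx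
      simpa using h₂

end IsSectionSuffix

end SectionSuffix

section Linked

variable {σ Q : Type} [DecidableEq Q] {A : TwoWayFA σ Q} {ts : List (Q × Q)}

theorem isRight_of_getElem?_LAnch_of_even
    (hdir : ∀ j (hj : j < ts.length), A.isRight ts[j].1 = decide (j % 2 = 0))
    {k : ℕ} {x : Q} (hk : k % 2 = 0) (hx : (LAnch A ts)[k]? = some x) : A.isRight x = true := by
  cases ts with
  | nil => simp [LAnch] at hx
  | cons t ts =>
    rw [← LAnchSuffix, LAnchSuffix_true_cons] at hx
    match k, hk, hx with
    | 0, _, hx =>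
      obtain rfl : t.1 = x := by simpa using hx
      exact hdir 0 (by simp)
    | k + 1, hk, hx =>
      obtain ⟨j, hj, hjx⟩ :=
        exists_getElem?_of_getElem?_chunkReduce _ _ (by simpa [LAnchSuffix] using hx)
      rw [getElem?_sSeqR] at hjx
      obtain ⟨hjl, hjx⟩ : ∃ h : j < ts.length, ts[j].1 = x := by
        simpa [List.getElem?_eq_some_iff, show j % 2 ≠ 0 by omega] using hjx
      have := hdir (j + 1) (by simpa using hjl)
      simpa [← hjx, show (j + 1) % 2 = 0 by omega] using this

theorem isRight_of_getElem?_RAnch_of_odd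
    (hdir : ∀ j (hj : j < ts.length), A.isRight ts[j].1 = decide (j % 2 = 0))
    {k : ℕ} {x : Q} (hk : k % 2 = 1) (hx : (RAnch A ts)[k]? = some x) :
    A.isRight x = false := by
  obtain ⟨j, hj, hjx⟩ := exists_getElem?_of_getElem?_chunkReduce _ _ hx
  rw [getElem?_sSeqR] at hjx
  obtain ⟨hjl, hjx⟩ : ∃ h : j < ts.length, ts[j].1 = x := by
    simpa [List.getElem?_eq_some_iff, show j % 2 ≠ 0 by omega] using hjx
  simpa [← hjx, show j % 2 ≠ 0 by omega] using hdir j hjl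

theorem isChain_bounce_of_anchorages
    (hdir : ∀ j (hj : j < ts.length), A.isRight ts[j].1 = decide (j % 2 = 0))
    (hR : ∀ k x y, k % 2 = 0 → (RAnch A ts)[k]? = some x → (RAnch A ts)[k + 1]? = some y →
      A.isRight x = true)
    (hL : ∀ k x, k % 2 = 1 → (LAnch A ts)[k]? = some x → A.isRight x = false) :
    ts.IsChain fun t t' => A.isRight t.2 ≠ A.isRight t.1 → t'.1 = t.2 := by
  rw [List.isChain_iff_getElem]
  intro m hm hturn
  by_contra hne
  have hsrc := hdir m (by omega)
  rcases Nat.mod_two_eq_zero_or_one m with hm2 | hm2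
  · have h₂ : A.isRight ts[m].2 = false := by
      simp only [hm2, decide_true] at hsrc
      simpa [hsrc] using hturn
    obtain ⟨k, hk, hx, hy⟩ := exists_getElem?_chunkReduce_of_not_good
      (fun u v => decide (u = v) && !A.isRight u) (sSeqR ts) (m / 2)
      (by rw [show 2 * (m / 2) = m by omega, getElem?_sSeqR_of_lt (by omega), if_pos hm2])
      (by rw [show 2 * (m / 2) + 1 = m + 1 by omega, getElem?_sSeqR_of_lt hm,
        if_neg (by omega)])
      (by simp [Ne.symm hne])
    simpa [h₂] using hR k _ _ hk hx hy
  · have h₂ : A.isRight ts[m].2 = true := by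
      simp only [hm2, one_ne_zero, decide_false] at hsrc
      simpa [hsrc] using hturn
    obtain ⟨t₀, ts, rfl⟩ : ∃ t₀ ts', ts = t₀ :: ts' :=
      List.exists_cons_of_ne_nil (by rintro rfl; simp at hm)
    obtain ⟨m, rfl⟩ : ∃ m', m = m' + 1 := ⟨m - 1, by omega⟩
    simp only [List.getElem_cons_succ] at h₂ hne
    have hmlen : m + 1 < ts.length := by simpa using hm
    obtain ⟨k, hk, hx, -⟩ := exists_getElem?_chunkReduce_of_not_good
      (fun u v => decide (u = v) && A.isRight u) (sSeqR ts) (m / 2)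
      (by rw [show 2 * (m / 2) = m by omega, getElem?_sSeqR_of_lt (by omega),
        if_pos (by omega)])
      (by rw [show 2 * (m / 2) + 1 = m + 1 by omega, getElem?_sSeqR_of_lt hmlen,
        if_neg (by omega)])
      (by simp [Ne.symm hne])
    have hLx : (LAnch A (t₀ :: ts))[k + 1]? = some ts[m].2 := by
      rw [← LAnchSuffix, LAnchSuffix_true_cons]
      simpa [LAnchSuffix] using hx
    simpa [h₂] using hL (k + 1) _ (by omega) hLx

theorem isSectionSuffix_of_linked {a : ℕ → σ ⊕ Bool} {r : ℕ → List (Q × Q)} {B : ℕ → List Q}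
    {n k : ℕ} {q₀ f : Q} (hcs : ∀ j < n, IsCrossSection A k (a j) (r j))
    (hL : ∀ j < n, LAnch A (r j) = B j) (hR : ∀ j < n, RAnch A (r j) = B (j + 1))
    (h₀ : B 0 = [q₀]) (hn : B n = [f]) (j : ℕ) (hj : j < n) :
    IsSectionSuffix A (a j) true (r j) := by
  have hodd : ∀ j ≤ n, (B j).length % 2 = 1 := by
    intro j
    induction j with
    | zero => simp [h₀]
    | succ j ih =>
      intro hj
      rw [← hR j hj, length_RAnch_mod_two, ← length_LAnch_mod_two, hL j hj]
      exact ih (by omega)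
  have hlen : (r j).length % 2 = 1 := by
    rw [← length_LAnch_mod_two, hL j hj]
    exact hodd j hj.le
  have hdir := (hcs j hj).isRight_getElem_fst
  obtain ⟨-, -, htr, ⟨t, ht, htR⟩, ⟨t', ht', ht'R⟩, halt⟩ := hcs j hj
  refine ⟨htr, by simpa [ht] using htR, halt, ?_, ?_⟩
  · intro u hu
    obtain rfl : t' = u := by simpa [ht'] using hu
    rw [List.getLast?_eq_getElem?, List.getElem?_eq_some_iff] at ht'
    obtain ⟨hlt, rfl⟩ := ht'
    exact ⟨by simpa [show ((r j).length - 1) % 2 = 0 by omega] using hdir _ hlt, ht'R⟩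
  · refine isChain_bounce_of_anchorages hdir (fun k x y hk hx hy => ?_) (fun k x hk hx => ?_)
    · rw [hR j hj] at hx hy
      rcases Nat.lt_or_ge (j + 1) n with hj' | hj'
      · rw [← hL (j + 1) hj'] at hx
        exact isRight_of_getElem?_LAnch_of_even (hcs (j + 1) hj').isRight_getElem_fst hk hx
      · rw [show j + 1 = n by omega, hn] at hy
        simp at hy
    · cases j with
      | zero =>
        rw [hL 0 hj, h₀] at hx
        simp [List.getElem?_eq_none (show [q₀].length ≤ k by simp; omega)] at hx
      | succ j =>
        rw [hL (j + 1) hj, ← hR j (by omega)] at hx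
        exact isRight_of_getElem?_RAnch_of_odd (hcs j (by omega)).isRight_getElem_fst hk hx

end Linked

section Runs

variable {σ Q : Type}

def extLetter (w : List σ) (i : ℕ) : σ ⊕ Bool := (extWord w).getD i (Sum.inr true)

theorem readAt_eq_getElem?_extWord (w : List σ) (i : ℕ) :
    TwoWayFA.readAt w i = (extWord w)[i]? := by
  rcases i with _ | i
  · rfl
  · simp only [TwoWayFA.readAt, extWord, List.getElem?_cons_succ, List.getElem?_append,
      List.length_map]
    split_ifs <;> simp_all; omega

theorem readAt_of_lt {w : List σ} {i : ℕ} (hi : i < w.length + 2) :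
    TwoWayFA.readAt w i = some (extLetter w i) := by
  rw [readAt_eq_getElem?_extWord, extLetter, List.getD_eq_getElem?_getD,
    List.getElem?_eq_getElem (by simp [extWord]; omega)]
  rfl

theorem readAt_of_le {w : List σ} {i : ℕ} (hi : w.length + 2 ≤ i) :
    TwoWayFA.readAt w i = none := by
  rw [readAt_eq_getElem?_extWord, List.getElem?_eq_none (by simp [extWord]; omega)]

variable {A : TwoWayFA σ Q} {w : List σ}

theorem sectionAt_cons {x y : Q × ℕ} {ρ : List (Q × ℕ)} (hρ : ρ.head? = some y) (j : ℕ) :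
    sectionAt A w (x :: ρ) j =
      (if A.readIdx x = j then [(x.1, y.1)] else []) ++ sectionAt A w ρ j := by
  obtain ⟨ρ, rfl⟩ : ∃ ρ', ρ = y :: ρ' := by
    cases ρ with
    | nil => simp at hρ
    | cons z ρ => exact ⟨ρ, by simpa using hρ⟩
  by_cases h : A.readIdx x = j <;> simp [sectionAt, h]

theorem crossSeq_eq_of_sectionAt {ρ : List (Q × ℕ)} {s : List (List (Q × Q))}
    (hlen : s.length = w.length + 2) (hsec : ∀ j, sectionAt A w ρ j = s.getD j []) :
    crossSeq A w ρ = s :=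
  List.ext_getElem (by simp [crossSeq, hlen]) fun j _ hj => by simp [crossSeq, hsec, hj]

theorem runVal_eq_sum_secVal {d : ℕ} (lam : Q → (σ ⊕ Bool) → Q → (Fin d → ℤ)) :
    ∀ ρ : List (Q × ℕ), runVal A lam w ρ =
      ∑ i ∈ Finset.range (w.length + 2), secVal lam (extLetter w i) (sectionAt A w ρ i)
  | [] | [_] => by simp [runVal, sectionAt, secVal]
  | x :: y :: ρ => by
    have hstep : stepWeight A lam w (x, y) = ∑ i ∈ Finset.range (w.length + 2),
        if A.readIdx x = i then lam x.1 (extLetter w i) y.1 else 0 := by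
      rw [Finset.sum_ite_eq]
      rcases Nat.lt_or_ge (A.readIdx x) (w.length + 2) with hx | hx
      · simp [stepWeight, readAt_of_lt hx, hx]
      · simp [stepWeight, readAt_of_le hx, not_lt.mpr hx]
    have hsec (i : ℕ) : secVal lam (extLetter w i) (sectionAt A w (x :: y :: ρ) i) =
        (if A.readIdx x = i then lam x.1 (extLetter w i) y.1 else 0) +
          secVal lam (extLetter w i) (sectionAt A w (y :: ρ) i) := by
      rw [sectionAt_cons rfl]
      split_ifs <;> simp [secVal]
    simp only [hsec, Finset.sum_add_distrib, ← hstep, ← runVal_eq_sum_secVal lam (y :: ρ)]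
    simp [runVal]

end Runs

section Weave

open Function

variable {σ Q : Type} [DecidableEq Q] (A : TwoWayFA σ Q) (w : List σ) (f : Q)

/-- Boundary `b` is head position `b`, between the letters `b - 1` and `b` of ⊢w⊣; these are the
states that the section on its left still has to exchange across it. -/
def boundaryL (r : ℕ → List (Q × Q)) (β : ℕ → Bool) : ℕ → List Q
  | 0 => []
  | b + 1 => RAnchSuffix A (β b) (r b)

/-- The states that the section to the right of boundary `b` still has to exchange across it;
past the right end, the run must leave in the state `f`. -/
def boundaryR (r : ℕ → List (Q × Q)) (β : ℕ → Bool) (b : ℕ) : List Q :=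
  if b = w.length + 2 then [f] else LAnchSuffix A (β b) (r b)

/-- The invariant of the run built from the sections: `r j` is what remains of the `j`-th section
and `β j` is the direction of its first source. At every boundary both sides agree on the
states still to cross it, except at the head position `p`, where the current state `q` is
owed by the side it will be read from. -/
structure WeaveInv (r : ℕ → List (Q × Q)) (β : ℕ → Bool) (q : Q) (p : ℕ) : Prop where
  le : p ≤ w.length + 2
  suffix : ∀ j, IsSectionSuffix A (extLetter w j) (β j) (r j)
  eq_nil : ∀ j, w.length + 2 ≤ j → r j = []
  balanced : ∀ b ≤ w.length + 2, b ≠ p → boundaryL A r β b = boundaryR A w f r β b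
  head_right : A.isRight q = true → boundaryR A w f r β p = q :: boundaryL A r β p
  head_left : A.isRight q = false → boundaryL A r β p = q :: boundaryR A w f r β p

variable {A w f} {r : ℕ → List (Q × Q)} {β : ℕ → Bool} {q : Q} {p : ℕ}

theorem boundaryL_update (i : ℕ) (ts : List (Q × Q)) (d : Bool) (b : ℕ) :
    boundaryL A (update r i ts) (update β i d) b =
      if b = i + 1 then RAnchSuffix A d ts else boundaryL A r β b := by
  cases b with
  | zero => simp [boundaryL]
  | succ b => by_cases h : b = i <;> simp [boundaryL, h]

theorem boundaryR_update {i : ℕ} (hi : i < w.length + 2) (ts : List (Q × Q)) (d : Bool)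
    (b : ℕ) : boundaryR A w f (update r i ts) (update β i d) b =
      if b = i then LAnchSuffix A d ts else boundaryR A w f r β b := by
  by_cases h : b = i
  · simp [boundaryR, h, hi.ne]
  · simp [boundaryR, h]

theorem sum_length_update_lt {α : Type} {r : ℕ → List α} {n i : ℕ} {t : α} {ts : List α}
    (hi : i < n) (hr : r i = t :: ts) :
    ∑ j ∈ Finset.range n, (update r i ts j).length < ∑ j ∈ Finset.range n, (r j).length :=
  Finset.sum_lt_sum (fun j _ => by by_cases hj : j = i <;> simp [hj, hr])
    ⟨i, Finset.mem_range.mpr hi, by simp [hr]⟩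

namespace WeaveInv

theorem init {q₀ : Q}
    (hsuf : ∀ j < w.length + 2, IsSectionSuffix A (extLetter w j) true (r j))
    (hnil : ∀ j, w.length + 2 ≤ j → r j = [])
    (hR : ∀ j < w.length + 2, RAnch A (r j) = boundaryR A w f r (fun _ => true) (j + 1))
    (h₀ : LAnch A (r 0) = [q₀]) : WeaveInv A w f r (fun _ => true) q₀ 0 := by
  have hq₀ : A.isRight q₀ = true := by
    obtain ⟨t, ts, hr⟩ : ∃ t ts, r 0 = t :: ts :=
      List.exists_cons_of_ne_nil fun h => by simp [h, LAnch] at h₀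
    rw [hr, ← LAnchSuffix, LAnchSuffix_true_cons, List.cons_eq_cons] at h₀
    exact h₀.1 ▸ (hr ▸ hsuf 0 (by omega)).head_isRight t rfl
  refine ⟨by omega, fun j => ?_, hnil, fun b hb hb0 => ?_, fun _ => ?_, fun hq => ?_⟩
  · rcases Nat.lt_or_ge j (w.length + 2) with hj | hj
    · exact hsuf j hj
    · exact hnil j hj ▸ .nil
  · obtain ⟨b, rfl⟩ := Nat.exists_eq_succ_of_ne_zero hb0
    exact hR b hb
  · rw [boundaryR, if_neg (by omega)]
    exact h₀
  · simp [hq₀] at hq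

theorem update_suffix (h : WeaveInv A w f r β q p) {i : ℕ} {t : Q × Q} {ts : List (Q × Q)}
    (hr : r i = t :: ts) (j : ℕ) :
    IsSectionSuffix A (extLetter w j) (update β i (!β i) j) (update r i ts j) := by
  by_cases hj : j = i
  · subst hj
    simpa using (hr ▸ h.suffix j).tail
  · simpa [hj] using h.suffix j

theorem update_eq_nil (h : WeaveInv A w f r β q p) {i : ℕ} (hi : i < w.length + 2)
    (ts : List (Q × Q)) (j : ℕ) (hj : w.length + 2 ≤ j) : update r i ts j = [] := by
  simpa [show j ≠ i by omega] using h.eq_nil j hj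

theorem step_right (h : WeaveInv A w f r β q p) (hq : A.isRight q = true)
    (hp : p ≠ w.length + 2) :
    ∃ t₂ ts, r p = (q, t₂) :: ts ∧ A.step w (q, p) (t₂, p + 1) ∧
      WeaveInv A w f (update r p ts) (update β p (!β p)) t₂ (p + 1) := by
  have hp' : p < w.length + 2 := lt_of_le_of_ne h.le hp
  have hhead := h.head_right hq
  rw [boundaryR, if_neg hp] at hhead
  have hβ : β p = true := by
    by_contra hβ
    rw [Bool.not_eq_true] at hβ
    have := (hβ ▸ h.suffix p).isRight_of_mem_head?_LAnchSuffix_false q (by rw [← hβ, hhead]; rfl)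
    simp [hq] at this
  obtain ⟨⟨q', t₂⟩, ts, hr⟩ : ∃ t ts, r p = t :: ts :=
    List.exists_cons_of_ne_nil (by intro h0; simp [h0] at hhead)
  rw [hβ, hr, LAnchSuffix_true_cons] at hhead
  obtain ⟨hq', hLp⟩ := List.cons_eq_cons.mp hhead
  rw [show q' = q from hq'] at hr
  have hsuf : IsSectionSuffix A (extLetter w p) true ((q, t₂) :: ts) := hβ ▸ hr ▸ h.suffix p
  have hbal := h.balanced (p + 1) hp' (by omega)
  rw [boundaryL, hβ, hr] at hbal
  refine ⟨t₂, ts, hr, ⟨extLetter w p, ?_, hsuf.mem_trans (q, t₂) (by simp), by simp [hq]⟩,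
    hp', h.update_suffix hr, h.update_eq_nil hp' ts, ?_, ?_, ?_⟩
  · simp [TwoWayFA.readIdx, hq, readAt_of_lt hp']
  · intro b hb hbp
    simp only [boundaryL_update, boundaryR_update hp', hβ, Bool.not_true, if_neg hbp]
    split_ifs with hb'
    · rw [hb', hLp]
    · exact h.balanced b hb hb'
  · intro ht₂
    simp only [boundaryL_update, boundaryR_update hp', hβ, Bool.not_true, if_pos,
      if_neg (show p + 1 ≠ p by omega)]
    rw [← hbal, RAnchSuffix_true_cons_of_isRight ht₂]
  · intro ht₂
    simp only [boundaryL_update, boundaryR_update hp', hβ, Bool.not_true, if_pos,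
      if_neg (show p + 1 ≠ p by omega)]
    obtain ⟨t', ts', rfl⟩ := List.exists_cons_of_ne_nil (hsuf.ne_nil_of_not_last (by simp [ht₂]))
    rw [RAnchSuffix_false_cons_of_bounce ht₂ (hsuf.bounce_head (by simp [ht₂])), hbal]

theorem step_left (h : WeaveInv A w f r β q p) (hq : A.isRight q = false) :
    ∃ i t₂ ts, p = i + 1 ∧ r i = (q, t₂) :: ts ∧ A.step w (q, i + 1) (t₂, i) ∧
      WeaveInv A w f (update r i ts) (update β i (!β i)) t₂ i := by
  have hhead := h.head_left hq
  obtain ⟨i, rfl⟩ : ∃ i, p = i + 1 := by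
    cases p with
    | zero => simp [boundaryL] at hhead
    | succ i => exact ⟨i, rfl⟩
  have hi : i < w.length + 2 := by have := h.le; omega
  rw [boundaryL] at hhead
  have hβ : β i = false := by
    by_contra hβ
    rw [Bool.not_eq_false] at hβ
    obtain ⟨x, l, hxl, hx⟩ := (hβ ▸ h.suffix i).exists_RAnchSuffix_true_eq_cons
      (by intro h0; simp [h0] at hhead)
    rw [hβ, hxl] at hhead
    obtain ⟨rfl, -⟩ := List.cons_eq_cons.mp hhead
    simp [hq] at hx
  obtain ⟨⟨q', t₂⟩, ts, hr⟩ : ∃ t ts, r i = t :: ts :=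
    List.exists_cons_of_ne_nil (by intro h0; simp [h0] at hhead)
  rw [hβ, hr, RAnchSuffix_false_cons] at hhead
  obtain ⟨hq', hRi⟩ := List.cons_eq_cons.mp hhead
  rw [show q' = q from hq'] at hr
  have hsuf : IsSectionSuffix A (extLetter w i) false ((q, t₂) :: ts) := hβ ▸ hr ▸ h.suffix i
  have hbal := h.balanced i (by omega) (by omega)
  rw [boundaryR, if_neg hi.ne, hβ, hr] at hbal
  refine ⟨i, t₂, ts, rfl, hr, ⟨extLetter w i, ?_, hsuf.mem_trans (q, t₂) (by simp), by simp [hq]⟩,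
    hi.le, h.update_suffix hr, h.update_eq_nil hi ts, ?_, ?_, ?_⟩
  · simp [TwoWayFA.readIdx, hq, readAt_of_lt hi]
  · intro b hb hbi
    simp only [boundaryL_update, boundaryR_update hi, hβ, Bool.not_false, if_neg hbi]
    split_ifs with hb'
    · rw [hb', hRi]
    · exact h.balanced b hb hb'
  · intro ht₂
    simp only [boundaryL_update, boundaryR_update hi, hβ, Bool.not_false, if_pos,
      if_neg (show i ≠ i + 1 by omega)]
    obtain ⟨t', ts', rfl⟩ := List.exists_cons_of_ne_nil (hsuf.ne_nil_of_not_last (by simp [hq]))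
    rw [LAnchSuffix_true_cons_of_bounce ht₂ (hsuf.bounce_head (by simp [ht₂])), hbal]
  · intro ht₂
    simp only [boundaryL_update, boundaryR_update hi, hβ, Bool.not_false, if_pos,
      if_neg (show i ≠ i + 1 by omega)]
    rw [hbal, LAnchSuffix_false_cons_of_not_isRight ht₂]

/-- Once the head has left ⊣, the boundaries empty out from right to left, so every section has
been consumed. -/
theorem eq_nil_of_final (h : WeaveInv A w f r β q (w.length + 2)) (hq : A.isRight q = true) :
    q = f ∧ ∀ j, r j = [] := by
  have hhead := h.head_right hq
  rw [boundaryR, if_pos rfl] at hhead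
  obtain ⟨rfl, hlast⟩ := List.cons_eq_cons.mp hhead
  have hstep : ∀ b < w.length + 2, boundaryL A r β (b + 1) = [] →
      r b = [] ∧ boundaryL A r β b = [] := by
    intro b hb hb1
    have hrb : r b = [] := by
      by_contra hne
      exact (h.suffix b).RAnchSuffix_ne_nil hne hb1
    refine ⟨hrb, ?_⟩
    rw [h.balanced b hb.le hb.ne, boundaryR, if_neg hb.ne, hrb, LAnchSuffix_nil]
  have hempty : ∀ b ≤ w.length + 2, boundaryL A r β b = [] := fun b hb =>
    Nat.decreasingInduction (fun b hb ih => (hstep b hb ih).2) hlast.symm hb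
  refine ⟨rfl, fun j => ?_⟩
  rcases Nat.lt_or_ge j (w.length + 2) with hj | hj
  · exact (hstep j hj (hempty (j + 1) hj)).1
  · exact h.eq_nil j hj

theorem exists_run {r : ℕ → List (Q × Q)} {β : ℕ → Bool} {q : Q} {p : ℕ}
    (h : WeaveInv A w f r β q p) :
    ∃ ρ : List (Q × ℕ), ρ.head? = some (q, p) ∧ ρ.getLast? = some (f, w.length + 2) ∧
      ρ.IsChain (A.step w) ∧ ∀ j, sectionAt A w ρ j = r j := by
  by_cases hfin : A.isRight q = true ∧ p = w.length + 2
  · obtain ⟨hq, rfl⟩ := hfin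
    obtain ⟨rfl, hr⟩ := h.eq_nil_of_final hq
    exact ⟨[(q, w.length + 2)], rfl, rfl, .singleton _, fun j => by simp [sectionAt, hr]⟩
  obtain ⟨i, t₂, ts, p', hi, hread, hr, hstep, h'⟩ : ∃ i t₂ ts p', i < w.length + 2 ∧
      A.readIdx (q, p) = i ∧ r i = (q, t₂) :: ts ∧ A.step w (q, p) (t₂, p') ∧
      WeaveInv A w f (update r i ts) (update β i (!β i)) t₂ p' := by
    cases hq : A.isRight q
    · obtain ⟨i, t₂, ts, rfl, hr, hstep, h'⟩ := h.step_left hq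
      exact ⟨i, t₂, ts, i, by have := h.le; omega, by simp [TwoWayFA.readIdx, hq], hr, hstep, h'⟩
    · have hp : p ≠ w.length + 2 := fun hp => hfin ⟨hq, hp⟩
      obtain ⟨t₂, ts, hr, hstep, h'⟩ := h.step_right hq hp
      exact ⟨p, t₂, ts, p + 1, lt_of_le_of_ne h.le hp, by simp [TwoWayFA.readIdx, hq], hr,
        hstep, h'⟩
  obtain ⟨ρ, hhead, hlast, hchain, hsec⟩ := h'.exists_run
  refine ⟨(q, p) :: ρ, rfl, ?_, List.isChain_cons.mpr ⟨by simpa [hhead] using hstep, hchain⟩,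
    fun j => ?_⟩
  · cases ρ with
    | nil => simp at hhead
    | cons => rwa [List.getLast?_cons_cons]
  · rw [sectionAt_cons hhead, hsec, hread]
    by_cases hj : j = i
    · subst hj
      simp [hr]
    · simp [Ne.symm hj, hj]
termination_by ∑ j ∈ Finset.range (w.length + 2), (r j).length
decreasing_by exact sum_length_update_lt hi hr

end WeaveInv

end Weave

/-- merging lemma. If `s = c₁,…,c_n` is a sequence of crossing
sections for the letters of ⊢w⊣, with `c₁` initial, `c_n` accepting, and consecutive
sections matching, then there is an accepting two-way run `ρ` over `w` whose crossing
section sequence is exactly `s`, and `V(ρ) = Σᵢ V(cᵢ)`. -/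
theorem crossing_sections_merge {σ Q : Type} [DecidableEq Q] (A : TwoWayFA σ Q)
    {d : ℕ} (lam : Q → (σ ⊕ Bool) → Q → (Fin d → ℤ)) (k : ℕ) (w : List σ)
    (s : List (List (Q × Q)))
    (hlen : s.length = w.length + 2)
    (hcs : ∀ i < s.length,
      IsCrossSection A k ((extWord w).getD i (Sum.inr true)) (s.getD i []))
    (hinit : ∃ c, s.head? = some c ∧ InitialCS A c)
    (hacc : ∃ c, s.getLast? = some c ∧ AcceptingCS A c)
    (hmatch : s.Chain' (MatchCS A)) :
    ∃ ρ, A.IsAccRun w ρ ∧ crossSeq A w ρ = s ∧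
      runVal A lam w ρ =
        ∑ i ∈ Finset.range s.length,
          secVal lam ((extWord w).getD i (Sum.inr true)) (s.getD i []) := by
  obtain ⟨c₀, hc₀, q₀, hq₀, h₀⟩ := hinit
  obtain ⟨cₙ, hcₙ, f, hf, hₙ⟩ := hacc
  set r : ℕ → List (Q × Q) := fun j => s.getD j []
  have hr : ∀ j (hj : j < s.length), r j = s[j] := fun j hj => by simp [r, hj]
  have hr₀ : r 0 = c₀ := by
    simp [r, List.getD_eq_getElem?_getD, ← List.head?_eq_getElem?, hc₀]
  have hrₙ : r (w.length + 1) = cₙ := by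
    rw [List.getLast?_eq_getElem?, hlen, show w.length + 2 - 1 = w.length + 1 from rfl] at hcₙ
    simp [r, List.getD_eq_getElem?_getD, hcₙ]
  have hR : ∀ j < w.length + 2, RAnch A (r j) = boundaryR A w f r (fun _ => true) (j + 1) := by
    intro j hj
    rw [boundaryR]
    split_ifs with hj'
    · rwa [show j = w.length + 1 by omega, hrₙ]
    · rw [hr j (by omega), hr (j + 1) (by omega)]
      exact List.isChain_iff_getElem.mp hmatch j (by omega)
  have hL : ∀ j < w.length + 2, LAnch A (r j) = boundaryR A w f r (fun _ => true) j :=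
    fun j hj => by simp [boundaryR, hj.ne, LAnchSuffix]
  have h₀' : LAnch A (r 0) = [q₀] := hr₀ ▸ h₀
  have hsuf := isSectionSuffix_of_linked (hlen ▸ hcs) hL hR (hL 0 (by omega) ▸ h₀')
    (show boundaryR A w f r _ (w.length + 2) = [f] by simp [boundaryR])
  have hnil : ∀ j, w.length + 2 ≤ j → r j = [] := fun j hj => by simp [r, hlen ▸ hj]
  obtain ⟨ρ, hhead, hlast, hchain, hsec⟩ := (WeaveInv.init hsuf hnil hR h₀').exists_run
  refine ⟨ρ, ⟨⟨by rintro rfl; simp at hhead, hchain⟩, ⟨q₀, hq₀, hhead⟩, ⟨f, hf, hlast⟩⟩,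
    crossSeq_eq_of_sectionAt hlen hsec, ?_⟩
  simp [runVal_eq_sum_secVal, hsec, hlen, r, extLetter]
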